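/- Let R be a ring, θ and η additive invariants on finite-length R-modules, and T a finite-length R-module. Let X' ⊆ T be the submodule with X' in 𝓘_θ and T/X' in 𝓟̄_θ, and X'' ⊆ T the submodule with X'' in 𝓘̄_θ and T/X'' in 𝓟_θ. Suppose T' and T'' are submodules with X' ⊆ T' ⊆ T'' ⊆ X'' such that: θ(T') = θ(X') and θ(T'') = θ(X'); every nonzero quotient Q of T'/X' with θ(Q) = 0 satisfies η(Q) > 0; every submodule S of X''/T' with θ(S) = 0 satisfies η(S) ≤ 0; every nonzero quotient Q of T''/X' with θ(Q) = 0 satisfies η(Q) ≥ 0; and every nonzero submodule S of X''/T'' with θ(S) = 0 satisfies η(S) < 0. Then there exists M ∈ ℝ such that for all m ≥ M: T' lies in 𝓘_{mθ+η} and T/T' lies in 𝓟̄_{mθ+η}, and T'' lies in 𝓘̄_{mθ+η} and T/T'' lies in 𝓟_{mθ+η} (that is, T' = T^min_{mθ+η} and T'' = T^max_{mθ+η}). -/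

import Mathlib

universe u

/-- An *additive invariant* on finite-length modules over a ring `R`: an assignment of a real
number to every module (whose value is only constrained on finite-length modules) that is
invariant under isomorphism and additive in short exact sequences. -/
structure AdditiveInvariant (R : Type u) [Ring R] where
  /-- The value of the invariant on a module. -/
  val : (M : Type u) → [AddCommGroup M] → [Module R M] → ℝ
  /-- Isomorphism invariance on finite-length modules. -/
  iso_inv : ∀ (M N : Type u) [AddCommGroup M] [Module R M] [AddCommGroup N] [Module R N],
    IsFiniteLength R M → (M ≃ₗ[R] N) → val M = val N
  /-- Additivity with respect to submodules and quotients, on finite-length modules. -/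
  additive : ∀ (M : Type u) [AddCommGroup M] [Module R M], IsFiniteLength R M →
    ∀ N : Submodule R M, val M = val N + val (M ⧸ N)

variable {R : Type u} [Ring R]

/-- `M` lies in `𝓘_θ`: every nonzero quotient `Q` of `M` satisfies `θ(Q) > 0`. -/
def MemI (θ : AdditiveInvariant R) (M : Type u) [AddCommGroup M] [Module R M] : Prop :=
  ∀ N : Submodule R M, N ≠ ⊤ → 0 < θ.val (M ⧸ N)

/-- `M` lies in `𝓘̄_θ`: every nonzero quotient `Q` of `M` satisfies `θ(Q) ≥ 0`. -/
def MemIbar (θ : AdditiveInvariant R) (M : Type u) [AddCommGroup M] [Module R M] : Prop :=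
  ∀ N : Submodule R M, N ≠ ⊤ → 0 ≤ θ.val (M ⧸ N)

/-- `M` lies in `𝓟_θ`: every nonzero submodule `X` of `M` satisfies `θ(X) < 0`. -/
def MemP (θ : AdditiveInvariant R) (M : Type u) [AddCommGroup M] [Module R M] : Prop :=
  ∀ X : Submodule R M, X ≠ ⊥ → θ.val X < 0

/-- `M` lies in `𝓟̄_θ`: every nonzero submodule `X` of `M` satisfies `θ(X) ≤ 0`. -/
def MemPbar (θ : AdditiveInvariant R) (M : Type u) [AddCommGroup M] [Module R M] : Prop :=
  ∀ X : Submodule R M, X ≠ ⊥ → θ.val X ≤ 0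

/-- `M` is `θ`-semistable: `θ(M) = 0` and every submodule `X` of `M` satisfies `θ(X) ≤ 0`. -/
def Semistable (θ : AdditiveInvariant R) (M : Type u) [AddCommGroup M] [Module R M] : Prop :=
  θ.val M = 0 ∧ ∀ X : Submodule R M, θ.val X ≤ 0

/-- The additive invariant `m·θ + η`. -/
noncomputable def AdditiveInvariant.smulAdd (m : ℝ) (θ η : AdditiveInvariant R) :
    AdditiveInvariant R where
  val M _ _ := m * θ.val M + η.val M
  iso_inv M N _ _ _ _ hM e := by
    rw [θ.iso_inv M N hM e, η.iso_inv M N hM e]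
  additive M _ _ hM N := by
    rw [θ.additive M hM N, η.additive M hM N]; ring

/-!
On submodules of `T`, `B ↦ θ(B)` is modular, and each membership condition is a comparison
of values on submodules: `T' ∈ 𝓘_φ` iff `φ(B) < φ(T')` for all `B < T'`, and `T/T' ∈ 𝓟̄_φ` iff
`φ(W) ≤ φ(T')` for all `W > T'` (similarly for `𝓘̄_φ`, `𝓟_φ`). In these terms `X'` is the least
and `X''` the greatest submodule on which `θ` attains its maximum, so `θ(X') = θ(X'')` and
`T'`, `T''` are maximisers too. Since `T` has finite length, `θ` and `η` take finitely many
values on submodules, so for `m ≫ 0` the invariant `mθ + η` compares two submodules as `θ` does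
whenever their `θ`-values differ. When they agree, the compared submodule lies between `X'` and
`X''`, and `η` decides, as prescribed by the hypotheses on `T'/X'`, `X''/T'`, `T''/X'`, `X''/T''`.
-/

open Submodule

section FiniteLength

variable {M : Type*} [AddCommGroup M] [Module R M]

theorem IsFiniteLength.submodule (hM : IsFiniteLength R M) (N : Submodule R M) :
    IsFiniteLength R N :=
  hM.of_injective N.injective_subtype

theorem IsFiniteLength.quotient (hM : IsFiniteLength R M) (N : Submodule R M) :
    IsFiniteLength R (M ⧸ N) :=
  hM.of_surjective N.mkQ_surjective

end FiniteLength

namespace AdditiveInvariant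

variable {M : Type u} [AddCommGroup M] [Module R M] (θ : AdditiveInvariant R)

@[simp]
theorem smulAdd_val (m : ℝ) (η : AdditiveInvariant R) (N : Type u) [AddCommGroup N] [Module R N] :
    (smulAdd m θ η).val N = m * θ.val N + η.val N :=
  rfl

theorem val_eq_zero_of_subsingleton [Subsingleton M] : θ.val M = 0 := by
  have h := θ.additive M .of_subsingleton ⊤
  rw [θ.iso_inv _ M .of_subsingleton topEquiv,
    θ.iso_inv (M ⧸ ⊤) M .of_subsingleton (LinearEquiv.ofSubsingleton _ _)] at h
  linarith

variable {θ}

theorem val_quotient (hM : IsFiniteLength R M) (N : Submodule R M) :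
    θ.val (M ⧸ N) = θ.val M - θ.val N := by
  linarith [θ.additive M hM N]

theorem val_comap_subtype (hM : IsFiniteLength R M) {B P : Submodule R M} (h : B ≤ P) :
    θ.val (comap P.subtype B) = θ.val B :=
  θ.iso_inv _ _ ((hM.submodule P).submodule _) (comapSubtypeEquivOfLe h)

theorem val_quotient_comap_subtype (hM : IsFiniteLength R M) {B P : Submodule R M} (h : B ≤ P) :
    θ.val (P ⧸ comap P.subtype B) = θ.val P - θ.val B := by
  rw [val_quotient (hM.submodule P), val_comap_subtype hM h]

theorem val_quotient_map_mkQ (hM : IsFiniteLength R M) {K L : Submodule R M} (h : K ≤ L) :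
    θ.val ((M ⧸ K) ⧸ map K.mkQ L) = θ.val M - θ.val L := by
  rw [θ.iso_inv _ _ ((hM.quotient K).quotient _) (quotientQuotientEquivQuotient K L h),
    val_quotient hM]

theorem val_map_mkQ (hM : IsFiniteLength R M) {K L : Submodule R M} (h : K ≤ L) :
    θ.val (map K.mkQ L) = θ.val L - θ.val K := by
  have := val_quotient (θ := θ) (hM.quotient K) (map K.mkQ L)
  rw [val_quotient_map_mkQ hM h, val_quotient hM] at this
  linarith

theorem val_inf_add_val_sup (hM : IsFiniteLength R M) (p q : Submodule R M) :
    θ.val ↥(p ⊓ q) + θ.val ↥(p ⊔ q) = θ.val p + θ.val q := by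
  have h := θ.iso_inv _ _ ((hM.submodule p).quotient _)
    (LinearMap.quotientInfEquivSupQuotient p q)
  rw [← comap_inf, val_quotient_comap_subtype hM inf_le_left,
    val_quotient_comap_subtype hM le_sup_right] at h
  linarith

open Pointwise in
theorem finite_range_val_submodule (θ : AdditiveInvariant R) (hM : IsFiniteLength R M) :
    (Set.range fun K : Submodule R M => θ.val K).Finite := by
  induction hM with
  | of_subsingleton =>
    exact (Set.finite_singleton 0).subset
      (Set.range_subset_iff.mpr fun K => θ.val_eq_zero_of_subsingleton)
  | @of_simple_quotient M _ _ N _ hN ih =>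
    have hM : IsFiniteLength R M := .of_simple_quotient hN
    refine (ih.add (Set.toFinite {0, θ.val M - θ.val N})).subset
      (Set.range_subset_iff.mpr fun K => ?_)
    have hKN := val_inf_add_val_sup (θ := θ) hM K N
    rw [← val_comap_subtype hM inf_le_right] at hKN
    rw [show θ.val K = θ.val (comap N.subtype (K ⊓ N)) + (θ.val ↥(K ⊔ N) - θ.val N) by linarith]
    refine Set.add_mem_add ⟨_, rfl⟩ ?_
    rcases (isSimpleModule_iff_isCoatom.mp ‹_›).le_iff.mp (le_sup_right : N ≤ K ⊔ N) with h | h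
    · rw [h, θ.iso_inv _ _ (hM.submodule ⊤) topEquiv]
      exact Set.mem_insert_of_mem _ rfl
    · rw [h, sub_self]
      exact Set.mem_insert _ _

end AdditiveInvariant

theorem exists_forall_ge_mul_add_lt_of_finite_range {ι : Type*} {f g : ι → ℝ}
    (hf : (Set.range f).Finite) (hg : (Set.range g).Finite) :
    ∃ M₀, ∀ m ≥ M₀, ∀ a b, f a < f b → m * f a + g a < m * f b + g b := by
  have hfin : (Set.range fun p : ι × ι => (g p.1 - g p.2) / (f p.2 - f p.1)).Finite := by
    refine (((hf.prod hg).prod (hf.prod hg)).image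
      fun q => (q.1.2 - q.2.2) / (q.2.1 - q.1.1)).subset ?_
    rintro _ ⟨⟨a, b⟩, rfl⟩
    exact ⟨((f a, g a), (f b, g b)), ⟨⟨⟨a, rfl⟩, ⟨a, rfl⟩⟩, ⟨b, rfl⟩, ⟨b, rfl⟩⟩, rfl⟩
  obtain ⟨C, hC⟩ := hfin.bddAbove
  refine ⟨C + 1, fun m hm a b hab => ?_⟩
  have h : (g a - g b) / (f b - f a) ≤ C := hC ⟨(a, b), rfl⟩
  rw [div_le_iff₀ (sub_pos.mpr hab)] at h
  nlinarith

section Maximizer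

variable {α : Type*} [Lattice α]

def IsLeastMaximizer (v : α → ℝ) (p : α) : Prop :=
  ∀ b, v b ≤ v p ∧ (v b = v p → p ≤ b)

def IsGreatestMaximizer (v : α → ℝ) (p : α) : Prop :=
  ∀ b, v b ≤ v p ∧ (v b = v p → b ≤ p)

variable {v : α → ℝ} {p : α}

theorem isLeastMaximizer_of_modular (hv : ∀ a b, v (a ⊓ b) + v (a ⊔ b) = v a + v b)
    (hlt : ∀ b < p, v b < v p) (hle : ∀ b, p < b → v b ≤ v p) : IsLeastMaximizer v p := by
  intro b
  by_cases hpb : p ≤ b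
  · refine ⟨?_, fun _ => hpb⟩
    rcases hpb.lt_or_eq with h | rfl
    · exact hle b h
    · exact le_rfl
  · have hinf : v (b ⊓ p) < v p := hlt _ (inf_le_right.lt_of_ne fun h => hpb (h ▸ inf_le_left))
    have hsup : v (b ⊔ p) ≤ v p := by
      rcases (le_sup_right : p ≤ b ⊔ p).lt_or_eq with h | h
      · exact hle _ h
      · rw [← h]
    have := hv b p
    exact ⟨by linarith, fun _ => by linarith⟩

theorem isGreatestMaximizer_of_modular (hv : ∀ a b, v (a ⊓ b) + v (a ⊔ b) = v a + v b)
    (hle : ∀ b < p, v b ≤ v p) (hlt : ∀ b, p < b → v b < v p) : IsGreatestMaximizer v p :=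
  isLeastMaximizer_of_modular (α := αᵒᵈ) (v := v ∘ OrderDual.ofDual)
    (fun a b => (add_comm _ _).trans (hv (OrderDual.ofDual a) (OrderDual.ofDual b)))
    hlt hle

end Maximizer

namespace Submodule

variable {M : Type*} [AddCommGroup M] [Module R M]

theorem map_mkQ_eq_bot_iff {p p' : Submodule R M} : map p.mkQ p' = ⊥ ↔ p' ≤ p := by
  rw [← LinearMap.le_ker_iff_map, ker_mkQ]

theorem map_mkQ_comap_subtype_ne_top {K B P : Submodule R M} (hKB : K ≤ B) (hBP : B < P) :
    map (comap P.subtype K).mkQ (comap P.subtype B) ≠ ⊤ := by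
  rw [Ne, map_mkQ_eq_top, sup_eq_right.mpr (comap_mono hKB), comap_subtype_eq_top]
  exact hBP.not_ge

theorem map_mkQ_comap_subtype_ne_bot {K W L : Submodule R M} (hKW : K < W) (hWL : W ≤ L) :
    map (comap L.subtype K).mkQ (comap L.subtype W) ≠ ⊥ := by
  rw [Ne, map_mkQ_eq_bot_iff, comap_subtype_le_iff, inf_eq_right.mpr hWL]
  exact fun h => hKW.not_ge (h.trans inf_le_right)

end Submodule

namespace AdditiveInvariant

variable {T : Type u} [AddCommGroup T] [Module R T] {φ : AdditiveInvariant R}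

theorem val_quotient_map_mkQ_comap_subtype (hT : IsFiniteLength R T) {K B P : Submodule R T}
    (hKB : K ≤ B) (hBP : B ≤ P) :
    φ.val ((P ⧸ comap P.subtype K) ⧸ map (comap P.subtype K).mkQ (comap P.subtype B)) =
      φ.val P - φ.val B := by
  rw [val_quotient_map_mkQ (hT.submodule P) (comap_mono hKB), val_comap_subtype hT hBP]

theorem val_map_mkQ_comap_subtype (hT : IsFiniteLength R T) {K W L : Submodule R T}
    (hKW : K ≤ W) (hWL : W ≤ L) :
    φ.val (map (comap L.subtype K).mkQ (comap L.subtype W)) = φ.val W - φ.val K := by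
  rw [val_map_mkQ (hT.submodule L) (comap_mono hKW), val_comap_subtype hT hWL,
    val_comap_subtype hT (hKW.trans hWL)]

theorem forall_ne_top_val_quotient_iff (hT : IsFiniteLength R T) (P : Submodule R T)
    (q : ℝ → Prop) :
    (∀ N : Submodule R P, N ≠ ⊤ → q (φ.val (P ⧸ N))) ↔ ∀ B < P, q (φ.val P - φ.val B) := by
  constructor
  · intro h B hBP
    rw [← val_quotient_comap_subtype hT hBP.le]
    exact h _ (by rw [Ne, comap_subtype_eq_top]; exact hBP.not_ge)
  · intro h N hN
    rw [← comap_map_eq_of_injective P.injective_subtype N] at hN ⊢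
    rw [val_quotient_comap_subtype hT (map_subtype_le P N)]
    exact h _ ((map_subtype_le P N).lt_of_ne fun h' => hN (by rw [h', comap_subtype_self]))

theorem forall_ne_bot_val_quotient_iff (hT : IsFiniteLength R T) (P : Submodule R T)
    (q : ℝ → Prop) :
    (∀ X : Submodule R (T ⧸ P), X ≠ ⊥ → q (φ.val X)) ↔ ∀ W, P < W → q (φ.val W - φ.val P) := by
  constructor
  · intro h W hPW
    rw [← val_map_mkQ hT hPW.le]
    exact h _ (by rw [Ne, map_mkQ_eq_bot_iff]; exact hPW.not_ge)
  · intro h X hX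
    rw [← map_comap_eq_of_surjective P.mkQ_surjective X] at hX ⊢
    rw [val_map_mkQ hT (le_comap_mkQ P X)]
    refine h _ ((le_comap_mkQ P X).lt_of_ne fun h' => hX ?_)
    rw [← h', mkQ_map_self]

theorem memI_iff (hT : IsFiniteLength R T) (P : Submodule R T) :
    MemI φ P ↔ ∀ B < P, φ.val B < φ.val P := by
  simp only [MemI, forall_ne_top_val_quotient_iff hT P (0 < ·), sub_pos]

theorem memIbar_iff (hT : IsFiniteLength R T) (P : Submodule R T) :
    MemIbar φ P ↔ ∀ B < P, φ.val B ≤ φ.val P := by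
  simp only [MemIbar, forall_ne_top_val_quotient_iff hT P (0 ≤ ·), sub_nonneg]

theorem memP_quotient_iff (hT : IsFiniteLength R T) (P : Submodule R T) :
    MemP φ (T ⧸ P) ↔ ∀ W, P < W → φ.val W < φ.val P := by
  simp only [MemP, forall_ne_bot_val_quotient_iff hT P (· < 0), sub_neg]

theorem memPbar_quotient_iff (hT : IsFiniteLength R T) (P : Submodule R T) :
    MemPbar φ (T ⧸ P) ↔ ∀ W, P < W → φ.val W ≤ φ.val P := by
  simp only [MemPbar, forall_ne_bot_val_quotient_iff hT P (· ≤ 0), sub_nonpos]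

variable {θ η : AdditiveInvariant R} {m : ℝ} {K P : Submodule R T}

theorem memI_smulAdd_of_isLeastMaximizer (hT : IsFiniteLength R T)
    (hm : ∀ A B : Submodule R T, θ.val A < θ.val B → (smulAdd m θ η).val A < (smulAdd m θ η).val B)
    (hK : IsLeastMaximizer (fun B : Submodule R T => θ.val B) K)
    (hθ : θ.val P = θ.val K)
    (h : ∀ N : Submodule R (P ⧸ comap P.subtype K), N ≠ ⊤ →
      θ.val ((P ⧸ comap P.subtype K) ⧸ N) = 0 → 0 < η.val ((P ⧸ comap P.subtype K) ⧸ N)) :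
    MemI (smulAdd m θ η) P := by
  rw [memI_iff hT]
  intro B hBP
  obtain ⟨hle, hKB⟩ : θ.val B ≤ θ.val K ∧ (θ.val B = θ.val K → K ≤ B) := hK B
  rcases (hle.trans_eq hθ.symm).lt_or_eq with hlt | heq
  · exact hm B P hlt
  · replace hKB := hKB (heq.trans hθ)
    have hη := h _ (map_mkQ_comap_subtype_ne_top hKB hBP)
      (by rw [val_quotient_map_mkQ_comap_subtype hT hKB hBP.le, heq, sub_self])
    rw [val_quotient_map_mkQ_comap_subtype hT hKB hBP.le] at hη
    simp only [smulAdd_val, heq]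
    linarith

theorem memIbar_smulAdd_of_isLeastMaximizer (hT : IsFiniteLength R T)
    (hm : ∀ A B : Submodule R T, θ.val A < θ.val B → (smulAdd m θ η).val A < (smulAdd m θ η).val B)
    (hK : IsLeastMaximizer (fun B : Submodule R T => θ.val B) K)
    (hθ : θ.val P = θ.val K)
    (h : ∀ N : Submodule R (P ⧸ comap P.subtype K), N ≠ ⊤ →
      θ.val ((P ⧸ comap P.subtype K) ⧸ N) = 0 → 0 ≤ η.val ((P ⧸ comap P.subtype K) ⧸ N)) :
    MemIbar (smulAdd m θ η) P := by
  rw [memIbar_iff hT]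
  intro B hBP
  obtain ⟨hle, hKB⟩ : θ.val B ≤ θ.val K ∧ (θ.val B = θ.val K → K ≤ B) := hK B
  rcases (hle.trans_eq hθ.symm).lt_or_eq with hlt | heq
  · exact (hm B P hlt).le
  · replace hKB := hKB (heq.trans hθ)
    have hη := h _ (map_mkQ_comap_subtype_ne_top hKB hBP)
      (by rw [val_quotient_map_mkQ_comap_subtype hT hKB hBP.le, heq, sub_self])
    rw [val_quotient_map_mkQ_comap_subtype hT hKB hBP.le] at hη
    simp only [smulAdd_val, heq]
    linarith

theorem memPbar_quotient_smulAdd_of_isGreatestMaximizer (hT : IsFiniteLength R T)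
    (hm : ∀ A B : Submodule R T, θ.val A < θ.val B → (smulAdd m θ η).val A < (smulAdd m θ η).val B)
    (hK : IsGreatestMaximizer (fun B : Submodule R T => θ.val B) K)
    (hθ : θ.val P = θ.val K)
    (h : ∀ S : Submodule R (K ⧸ comap K.subtype P), θ.val S = 0 → η.val S ≤ 0) :
    MemPbar (smulAdd m θ η) (T ⧸ P) := by
  rw [memPbar_quotient_iff hT]
  intro W hPW
  obtain ⟨hle, hWK⟩ : θ.val W ≤ θ.val K ∧ (θ.val W = θ.val K → W ≤ K) := hK W
  rcases (hle.trans_eq hθ.symm).lt_or_eq with hlt | heq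
  · exact (hm W P hlt).le
  · replace hWK := hWK (heq.trans hθ)
    have hη := h _ (by rw [val_map_mkQ_comap_subtype hT hPW.le hWK, heq, sub_self])
    rw [val_map_mkQ_comap_subtype hT hPW.le hWK] at hη
    simp only [smulAdd_val, heq]
    linarith

theorem memP_quotient_smulAdd_of_isGreatestMaximizer (hT : IsFiniteLength R T)
    (hm : ∀ A B : Submodule R T, θ.val A < θ.val B → (smulAdd m θ η).val A < (smulAdd m θ η).val B)
    (hK : IsGreatestMaximizer (fun B : Submodule R T => θ.val B) K)
    (hθ : θ.val P = θ.val K)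
    (h : ∀ S : Submodule R (K ⧸ comap K.subtype P), S ≠ ⊥ → θ.val S = 0 → η.val S < 0) :
    MemP (smulAdd m θ η) (T ⧸ P) := by
  rw [memP_quotient_iff hT]
  intro W hPW
  obtain ⟨hle, hWK⟩ : θ.val W ≤ θ.val K ∧ (θ.val W = θ.val K → W ≤ K) := hK W
  rcases (hle.trans_eq hθ.symm).lt_or_eq with hlt | heq
  · exact hm W P hlt
  · replace hWK := hWK (heq.trans hθ)
    have hη := h _ (map_mkQ_comap_subtype_ne_bot hPW hWK)
      (by rw [val_map_mkQ_comap_subtype hT hPW.le hWK, heq, sub_self])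
    rw [val_map_mkQ_comap_subtype hT hPW.le hWK] at hη
    simp only [smulAdd_val, heq]
    linarith

end AdditiveInvariant

open AdditiveInvariant

theorem perturbation_min_max_general (R : Type u) [Ring R] (θ η : AdditiveInvariant R)
    (T : Type u) [AddCommGroup T] [Module R T] (hT : IsFiniteLength R T)
    (X' X'' T' T'' : Submodule R T)
    (hX'I : MemI θ X') (hX'P : MemPbar θ (T ⧸ X'))
    (hX''I : MemIbar θ X'') (hX''P : MemP θ (T ⧸ X''))
    (hθT' : θ.val T' = θ.val X') (hθT'' : θ.val T'' = θ.val X')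
    (hmin : ∀ N : Submodule R (T' ⧸ Submodule.comap T'.subtype X'), N ≠ ⊤ →
      θ.val ((T' ⧸ Submodule.comap T'.subtype X') ⧸ N) = 0 →
      0 < η.val ((T' ⧸ Submodule.comap T'.subtype X') ⧸ N))
    (hmin' : ∀ S : Submodule R (X'' ⧸ Submodule.comap X''.subtype T'),
      θ.val S = 0 → η.val S ≤ 0)
    (hmax : ∀ N : Submodule R (T'' ⧸ Submodule.comap T''.subtype X'), N ≠ ⊤ →
      θ.val ((T'' ⧸ Submodule.comap T''.subtype X') ⧸ N) = 0 →
      0 ≤ η.val ((T'' ⧸ Submodule.comap T''.subtype X') ⧸ N))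
    (hmax' : ∀ S : Submodule R (X'' ⧸ Submodule.comap X''.subtype T''), S ≠ ⊥ →
      θ.val S = 0 → η.val S < 0) :
    ∃ M₀ : ℝ, ∀ m : ℝ, M₀ ≤ m →
      MemI (AdditiveInvariant.smulAdd m θ η) T' ∧
      MemPbar (AdditiveInvariant.smulAdd m θ η) (T ⧸ T') ∧
      MemIbar (AdditiveInvariant.smulAdd m θ η) T'' ∧
      MemP (AdditiveInvariant.smulAdd m θ η) (T ⧸ T'') := by
  obtain ⟨M₀, hM₀⟩ := exists_forall_ge_mul_add_lt_of_finite_range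
    (θ.finite_range_val_submodule hT) (η.finite_range_val_submodule hT)
  have hv := val_inf_add_val_sup (θ := θ) hT
  have hX' : IsLeastMaximizer (fun B : Submodule R T => θ.val B) X' :=
    isLeastMaximizer_of_modular hv ((memI_iff hT X').1 hX'I) ((memPbar_quotient_iff hT X').1 hX'P)
  have hX'' : IsGreatestMaximizer (fun B : Submodule R T => θ.val B) X'' :=
    isGreatestMaximizer_of_modular hv ((memIbar_iff hT X'').1 hX''I)
      ((memP_quotient_iff hT X'').1 hX''P)
  have hθX'' : θ.val X'' = θ.val X' := le_antisymm (hX' X'').1 (hX'' X').1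
  refine ⟨M₀, fun m hm => ⟨?_, ?_, ?_, ?_⟩⟩
  · exact memI_smulAdd_of_isLeastMaximizer hT (hM₀ m hm) hX' hθT' hmin
  · exact memPbar_quotient_smulAdd_of_isGreatestMaximizer hT (hM₀ m hm) hX'' (hθT'.trans hθX''.symm)
      hmin'
  · exact memIbar_smulAdd_of_isLeastMaximizer hT (hM₀ m hm) hX' hθT'' hmax
  · exact memP_quotient_smulAdd_of_isGreatestMaximizer hT (hM₀ m hm) hX'' (hθT''.trans hθX''.symm)
      hmax'

/-- **Proposition (Proposition `pr:SubfacPert`, perturbation of the stability parameter).**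
Let `X' = T_θ^min`, `X'' = T_θ^max`, and let `T' ⊆ T''` be submodules between `X'` and
`X''` such that `θ(T') = θ(T'') = θ(X')`, every nonzero quotient `Q` of `T'/X'` with
`θ(Q) = 0` has `η(Q) > 0`, every submodule `S` of `X''/T'` with `θ(S) = 0` has `η(S) ≤ 0`,
every nonzero quotient `Q` of `T''/X'` with `θ(Q) = 0` has `η(Q) ≥ 0`, and every nonzero
submodule `S` of `X''/T''` with `θ(S) = 0` has `η(S) < 0`. Then for all sufficiently large
`m`, one has `T' = T^min_{mθ+η}` and `T'' = T^max_{mθ+η}`. -/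
theorem perturbation_min_max (R : Type u) [Ring R] (θ η : AdditiveInvariant R)
    (T : Type u) [AddCommGroup T] [Module R T] (hT : IsFiniteLength R T)
    (X' X'' T' T'' : Submodule R T)
    (hX'I : MemI θ X') (hX'P : MemPbar θ (T ⧸ X'))
    (hX''I : MemIbar θ X'') (hX''P : MemP θ (T ⧸ X''))
    (h1 : X' ≤ T') (h2 : T' ≤ T'') (h3 : T'' ≤ X'')
    (hθT' : θ.val T' = θ.val X') (hθT'' : θ.val T'' = θ.val X')
    (hmin : ∀ N : Submodule R (T' ⧸ Submodule.comap T'.subtype X'), N ≠ ⊤ →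
      θ.val ((T' ⧸ Submodule.comap T'.subtype X') ⧸ N) = 0 →
      0 < η.val ((T' ⧸ Submodule.comap T'.subtype X') ⧸ N))
    (hmin' : ∀ S : Submodule R (X'' ⧸ Submodule.comap X''.subtype T'),
      θ.val S = 0 → η.val S ≤ 0)
    (hmax : ∀ N : Submodule R (T'' ⧸ Submodule.comap T''.subtype X'), N ≠ ⊤ →
      θ.val ((T'' ⧸ Submodule.comap T''.subtype X') ⧸ N) = 0 →
      0 ≤ η.val ((T'' ⧸ Submodule.comap T''.subtype X') ⧸ N))
    (hmax' : ∀ S : Submodule R (X'' ⧸ Submodule.comap X''.subtype T''), S ≠ ⊥ →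
      θ.val S = 0 → η.val S < 0) :
    ∃ M₀ : ℝ, ∀ m : ℝ, M₀ ≤ m →
      MemI (AdditiveInvariant.smulAdd m θ η) T' ∧
      MemPbar (AdditiveInvariant.smulAdd m θ η) (T ⧸ T') ∧
      MemIbar (AdditiveInvariant.smulAdd m θ η) T'' ∧
      MemP (AdditiveInvariant.smulAdd m θ η) (T ⧸ T'') :=
  perturbation_min_max_general R θ η T hT X' X'' T' T'' hX'I hX'P hX''I hX''P hθT' hθT'' hmin hmin'
    hmax hmax'
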